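/- For every x ∈ ℝ^d: (1/n)∑_{i=1}^n ‖∇f_i(x) − ∇f_i(x*)‖² ≤ 2L·[F(x) − F(x*)]. -/

import Mathlib

open scoped BigOperators
open scoped RealInnerProductSpace

section Aux

variable {E : Type*} [NormedAddCommGroup E] [InnerProductSpace ℝ E] [CompleteSpace E]

/-- Derivative of a function along a line, given its gradient. -/
lemma line_hasDerivAt {h : E → ℝ} {gh : E → E}
    (hg : ∀ z, HasGradientAt h (gh z) z) (a v : E) (t : ℝ) :
    HasDerivAt (fun s : ℝ => h (a + s • v)) ⟪gh (a + t • v), v⟫ t := by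
  have hl : HasDerivAt (fun s : ℝ => a + s • v) v t := by
    simpa using ((hasDerivAt_id t).smul_const v).const_add a
  have := (hg (a + t • v)).hasFDerivAt.comp_hasDerivAt t hl
  simpa [InnerProductSpace.toDual_apply_apply, Function.comp_def] using this

/-- First-order lower bound for a convex differentiable function. -/
lemma convex_grad_ineq {h : E → ℝ} {gh : E → E}
    (hconv : ConvexOn ℝ Set.univ h) (hg : ∀ z, HasGradientAt h (gh z) z) (x y : E) :
    h x + ⟪gh x, y - x⟫ ≤ h y := by
  set φ : ℝ → ℝ := fun t => h (x + t • (y - x)) with hφ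
  have hφc : ConvexOn ℝ Set.univ φ := by
    have hcomp := hconv.comp_affineMap (AffineMap.lineMap x y : ℝ →ᵃ[ℝ] E)
    have : (AffineMap.lineMap x y : ℝ →ᵃ[ℝ] E) ⁻¹' Set.univ = (Set.univ : Set ℝ) := by simp
    rw [this] at hcomp
    have heq : φ = h ∘ (AffineMap.lineMap x y) := by
      funext t
      simp only [φ, Function.comp_apply, AffineMap.lineMap_apply, vsub_eq_sub, vadd_eq_add]
      congr 1
      module
    rw [heq]
    exact hcomp
  have hd : HasDerivAt φ ⟪gh x, y - x⟫ 0 := by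
    have := line_hasDerivAt hg x (y - x) 0
    simpa using this
  have hslope := hφc.le_slope_of_hasDerivAt (Set.mem_univ 0) (Set.mem_univ 1)
    (by norm_num) hd
  have h0 : φ 0 = h x := by simp [φ]
  have h1 : φ 1 = h y := by simp [φ]
  rw [slope_def_field] at hslope
  simp [h0, h1] at hslope
  linarith

/-- Descent lemma for an `L`-smooth function. -/
lemma descent_lemma {h : E → ℝ} {gh : E → E} {L : ℝ} (hL : 0 < L)
    (hg : ∀ z, HasGradientAt h (gh z) z)
    (hLip : ∀ x y, ‖gh x - gh y‖ ≤ L * ‖x - y‖) (x y : E) :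
    h y ≤ h x + ⟪gh x, y - x⟫ + L / 2 * ‖y - x‖ ^ 2 := by
  set v := y - x with hv
  set ψ : ℝ → ℝ := fun t => h (x + t • v) - t * ⟪gh x, v⟫ - L * t ^ 2 / 2 * ‖v‖ ^ 2 with hψ
  have hψd : ∀ t : ℝ, HasDerivAt ψ
      (⟪gh (x + t • v), v⟫ - ⟪gh x, v⟫ - L * t * ‖v‖ ^ 2) t := by
    intro t
    have h1 := line_hasDerivAt hg x v t
    have h2 : HasDerivAt (fun t : ℝ => t * ⟪gh x, v⟫) ⟪gh x, v⟫ t := by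
      simpa using (hasDerivAt_id t).mul_const (⟪gh x, v⟫)
    have h3 : HasDerivAt (fun t : ℝ => L * t ^ 2 / 2 * ‖v‖ ^ 2) (L * t * ‖v‖ ^ 2) t := by
      have hp : HasDerivAt (fun t : ℝ => t ^ 2) (2 * t) t := by
        simpa using hasDerivAt_pow 2 t
      have := ((hp.const_mul L).div_const 2).mul_const (‖v‖ ^ 2)
      exact this.congr_deriv (by ring)
    have := (h1.sub h2).sub h3
    exact this
  have hmono : AntitoneOn ψ (Set.Icc 0 1) := by
    apply antitoneOn_of_deriv_nonpos (convex_Icc 0 1)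
    · exact fun t _ => (hψd t).continuousAt.continuousWithinAt
    · intro t ht
      exact ((hψd t).differentiableAt).differentiableWithinAt
    · intro t ht
      rw [interior_Icc] at ht
      rw [(hψd t).deriv]
      have hcs : ⟪gh (x + t • v) - gh x, v⟫ ≤ ‖gh (x + t • v) - gh x‖ * ‖v‖ :=
        real_inner_le_norm _ _
      have hlip : ‖gh (x + t • v) - gh x‖ ≤ L * (t * ‖v‖) := by
        have := hLip (x + t • v) x
        simpa [norm_smul, abs_of_nonneg ht.1.le] using this
      have hinner : ⟪gh (x + t • v), v⟫ - ⟪gh x, v⟫ ≤ L * t * ‖v‖ ^ 2 := by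
        rw [← inner_sub_left]
        calc ⟪gh (x + t • v) - gh x, v⟫ ≤ ‖gh (x + t • v) - gh x‖ * ‖v‖ := hcs
          _ ≤ L * (t * ‖v‖) * ‖v‖ := by
              apply mul_le_mul_of_nonneg_right hlip (norm_nonneg _)
          _ = L * t * ‖v‖ ^ 2 := by ring
      linarith
  have := hmono (Set.mem_Icc.2 ⟨le_refl 0, zero_le_one⟩)
    (Set.mem_Icc.2 ⟨zero_le_one, le_refl 1⟩) zero_le_one
  have h0 : ψ 0 = h x := by simp [ψ]
  have h1 : ψ 1 = h y - ⟪gh x, v⟫ - L / 2 * ‖v‖ ^ 2 := by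
    have hx1 : x + (1 : ℝ) • v = y := by rw [hv]; module
    simp only [ψ, hx1, one_pow, mul_one, one_mul]
  rw [h0, h1] at this
  linarith

/-- Co-coercivity type bound: `‖∇h(x) - ∇h(x*)‖² ≤ 2L (h(x) - h(x*) - ⟪∇h(x*), x - x*⟫)`. -/
lemma cocoercivity {h : E → ℝ} {gh : E → E} {L : ℝ} (hL : 0 < L)
    (hconv : ConvexOn ℝ Set.univ h) (hg : ∀ z, HasGradientAt h (gh z) z)
    (hLip : ∀ x y, ‖gh x - gh y‖ ≤ L * ‖x - y‖) (x xs : E) :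
    ‖gh x - gh xs‖ ^ 2 ≤ 2 * L * (h x - h xs - ⟪gh xs, x - xs⟫) := by
  set u := gh x - gh xs with hu
  set y := x - L⁻¹ • u with hy
  have hyx : y - x = -(L⁻¹ • u) := by rw [hy]; module
  have hdesc := descent_lemma hL hg hLip x y
  have hconvi := convex_grad_ineq hconv hg xs y
  have hyxs : y - xs = (x - xs) - L⁻¹ • u := by rw [hy]; module
  have e1 : ⟪gh x, y - x⟫ = -(L⁻¹ * ⟪gh x, u⟫) := by
    rw [hyx, inner_neg_right, real_inner_smul_right]
  have e2 : ‖y - x‖ ^ 2 = (L⁻¹) ^ 2 * ‖u‖ ^ 2 := by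
    rw [hyx, norm_neg, norm_smul, Real.norm_eq_abs, abs_of_nonneg (inv_nonneg.2 hL.le)]
    ring
  have e3 : ⟪gh xs, y - xs⟫ = ⟪gh xs, x - xs⟫ - L⁻¹ * ⟪gh xs, u⟫ := by
    rw [hyxs, inner_sub_right, real_inner_smul_right]
  have e4 : ⟪gh x, u⟫ - ⟪gh xs, u⟫ = ‖u‖ ^ 2 := by
    rw [← inner_sub_left, ← hu, real_inner_self_eq_norm_sq]
  rw [e1, e2] at hdesc
  rw [e3] at hconvi
  have hL' : L⁻¹ > 0 := inv_pos.2 hL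
  have key : L⁻¹ * ‖u‖ ^ 2 - L / 2 * ((L⁻¹) ^ 2 * ‖u‖ ^ 2) ≤
      h x - h xs - ⟪gh xs, x - xs⟫ := by nlinarith [e4]
  have hsimp : L⁻¹ * ‖u‖ ^ 2 - L / 2 * ((L⁻¹) ^ 2 * ‖u‖ ^ 2) = ‖u‖ ^ 2 / (2 * L) := by
    field_simp
    ring
  rw [hsimp] at key
  rw [div_le_iff₀ (by positivity)] at key
  linarith [key]

end Aux

/-- Lemma 3.4 of Xiao–Zhang: `(1/n)∑ᵢ‖∇fᵢ(x) - ∇fᵢ(x*)‖² ≤ 2L[F(x) - F(x*)]`. -/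
theorem gradient_deviation_bound {d n : ℕ} (hn : 0 < n) (L : ℝ) (hL : 0 < L)
    (f : Fin n → EuclideanSpace ℝ (Fin d) → ℝ)
    (g : Fin n → EuclideanSpace ℝ (Fin d) → EuclideanSpace ℝ (Fin d))
    (hconv : ∀ i, ConvexOn ℝ Set.univ (f i))
    (hgrad : ∀ i x, HasGradientAt (f i) (g i x) x)
    (hLip : ∀ i x y, ‖g i x - g i y‖ ≤ L * ‖x - y‖)
    (r : EuclideanSpace ℝ (Fin d) → ℝ) (hr : ConvexOn ℝ Set.univ r)
    (F : EuclideanSpace ℝ (Fin d) → ℝ)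
    (hF : ∀ x, F x = (n : ℝ)⁻¹ * ∑ i, f i x + r x)
    (xstar : EuclideanSpace ℝ (Fin d)) (hstar : ∀ x, F xstar ≤ F x)
    (x : EuclideanSpace ℝ (Fin d)) :
    (n : ℝ)⁻¹ * ∑ i, ‖g i x - g i xstar‖ ^ 2 ≤ 2 * L * (F x - F xstar) := by
  set v := x - xstar with hv
  -- step 1: directional derivative of the smooth part at xstar dominates r xstar - r x
  set φ : ℝ → ℝ := fun t => (n : ℝ)⁻¹ * ∑ i, f i (xstar + t • v) with hφ
  have hφd : HasDerivAt φ ((n : ℝ)⁻¹ * ∑ i, ⟪g i xstar, v⟫) 0 := by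
    have hsum : HasDerivAt (fun t : ℝ => ∑ i, f i (xstar + t • v))
        (∑ i, ⟪g i xstar, v⟫) 0 := by
      apply HasDerivAt.fun_sum
      intro i _
      have := line_hasDerivAt (hgrad i) xstar v 0
      simpa using this
    simpa using hsum.const_mul ((n : ℝ)⁻¹)
  have hslope_lb : ∀ t : ℝ, t ∈ Set.Ioc (0:ℝ) 1 → r xstar - r x ≤ slope φ 0 t := by
    intro t ht
    have hstep : F xstar ≤ F (xstar + t • v) := hstar _
    have hcomb : xstar + t • v = (1 - t) • xstar + t • x := by rw [hv]; module
    have hrc : r (xstar + t • v) ≤ (1 - t) * r xstar + t * r x := by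
      rw [hcomb]
      have := hr.2 (Set.mem_univ xstar) (Set.mem_univ x)
        (by linarith [ht.2] : (0:ℝ) ≤ 1 - t) ht.1.le (by ring)
      simpa [smul_eq_mul] using this
    rw [hF, hF] at hstep
    have hφt : φ t - φ 0 ≥ t * (r xstar - r x) := by
      have h0 : φ 0 = (n : ℝ)⁻¹ * ∑ i, f i xstar := by simp [φ]
      have h1 : φ t = (n : ℝ)⁻¹ * ∑ i, f i (xstar + t • v) := rfl
      rw [h0, h1]
      nlinarith [hstep, hrc]
    rw [slope_def_field, sub_zero, le_div_iff₀ ht.1]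
    nlinarith [hφt]
  have hD : r xstar - r x ≤ (n : ℝ)⁻¹ * ∑ i, ⟪g i xstar, v⟫ := by
    have htend : Filter.Tendsto (slope φ 0) (nhdsWithin 0 (Set.Ioi 0))
        (nhds ((n : ℝ)⁻¹ * ∑ i, ⟪g i xstar, v⟫)) := by
      have := hasDerivAt_iff_tendsto_slope.mp hφd
      exact this.mono_left (nhdsWithin_mono _ (fun t ht => ne_of_gt ht))
    apply ge_of_tendsto htend
    filter_upwards [Ioc_mem_nhdsGT_of_mem (Set.mem_Ico.2 ⟨le_refl 0, zero_lt_one⟩)] with t ht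
    exact hslope_lb t ht
  -- step 2: per-component cocoercivity and summation
  have hper : ∀ i, ‖g i x - g i xstar‖ ^ 2 ≤
      2 * L * (f i x - f i xstar - ⟪g i xstar, v⟫) := by
    intro i
    exact cocoercivity hL (hconv i) (hgrad i) (hLip i) x xstar
  have hsum : ∑ i, ‖g i x - g i xstar‖ ^ 2 ≤
      2 * L * (∑ i, f i x - ∑ i, f i xstar - ∑ i, ⟪g i xstar, v⟫) := by
    calc ∑ i, ‖g i x - g i xstar‖ ^ 2
        ≤ ∑ i, 2 * L * (f i x - f i xstar - ⟪g i xstar, v⟫) :=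
          Finset.sum_le_sum (fun i _ => hper i)
      _ = 2 * L * (∑ i, f i x - ∑ i, f i xstar - ∑ i, ⟪g i xstar, v⟫) := by
          rw [← Finset.mul_sum]
          congr 1
          rw [Finset.sum_sub_distrib, Finset.sum_sub_distrib]
  have hn' : (0:ℝ) < (n : ℝ)⁻¹ := by positivity
  have hmul := mul_le_mul_of_nonneg_left hsum hn'.le
  calc (n : ℝ)⁻¹ * ∑ i, ‖g i x - g i xstar‖ ^ 2
      ≤ (n : ℝ)⁻¹ * (2 * L * (∑ i, f i x - ∑ i, f i xstar - ∑ i, ⟪g i xstar, v⟫)) := hmul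
    _ = 2 * L * ((n : ℝ)⁻¹ * ∑ i, f i x - (n : ℝ)⁻¹ * ∑ i, f i xstar
        - (n : ℝ)⁻¹ * ∑ i, ⟪g i xstar, v⟫) := by ring
    _ ≤ 2 * L * ((n : ℝ)⁻¹ * ∑ i, f i x - (n : ℝ)⁻¹ * ∑ i, f i xstar
        - (r xstar - r x)) := by nlinarith [hD]
    _ = 2 * L * (F x - F xstar) := by rw [hF, hF]; ring
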